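/- arXiv:1906.03849 — 2 statements merged into one kernel-verified Lean document; each statement's English description precedes it below -/
import Mathlib

section
/- Let x ∈ ℝ^d, ε > 0, and consider K decision trees with leaf boxes forming partitions of ℝ^d. Build the graph G whose vertices are leaves i with B^i ∩ Ball_∞(x, ε) ≠ ∅, with edges between leaves of different trees whose boxes intersect. Then a tuple C = (i^(1), …, i^(K)) satisfies: there exists x' with ‖x'−x‖_∞ ≤ ε reaching leaf i^(k) in tree k for every k, if and only if {i^(1), …, i^(K)} is a K-clique in G. -/
/-- A `d`-dimensional box: product of half-open intervals `(l t, r t]`. -/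
def box {d : ℕ} (l r : Fin d → ℝ) : Set (Fin d → ℝ) :=
  Set.univ.pi fun t => Set.Ioc (l t) (r t)

/-- A tuple of leaves `(c 1, …, c K)` (one per tree) is simultaneously reachable by some
`x'` with `‖x' - x‖_∞ ≤ ε` iff it forms a `K`-clique in the graph whose vertices are
leaves with box meeting `Ball_∞(x, ε)` and whose edges join intersecting boxes from
different trees.  (`x'` reaches leaf `i` of tree `k` iff `x' ∈ B^i`; `Fin d → ℝ`
carries the sup metric, so `Metric.closedBall x ε` is the ℓ∞ ball.) -/
theorem valid_tuple_iff_clique (d K : ℕ) (ι : Fin K → Type)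
    (l r : ∀ k, ι k → Fin d → ℝ)
    (hdisj : ∀ k, Pairwise fun i j : ι k =>
      Disjoint (box (l k i) (r k i)) (box (l k j) (r k j)))
    (hcover : ∀ k, (⋃ i, box (l k i) (r k i)) = Set.univ)
    (x : Fin d → ℝ) (ε : ℝ) (hε : 0 < ε)
    (c : ∀ k, ι k) :
    (∃ x' : Fin d → ℝ, dist x' x ≤ ε ∧ ∀ k, x' ∈ box (l k (c k)) (r k (c k))) ↔
    ((∀ k, (box (l k (c k)) (r k (c k)) ∩ Metric.closedBall x ε).Nonempty) ∧
      ∀ k k' : Fin K, k ≠ k' →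
        (box (l k (c k)) (r k (c k)) ∩ box (l k' (c k')) (r k' (c k'))).Nonempty) := by
  constructor
  · rintro ⟨x', hx', hmem⟩
    exact ⟨fun k => ⟨x', hmem k, Metric.mem_closedBall.2 hx'⟩,
      fun k k' _ => ⟨x', hmem k, hmem k'⟩⟩
  · rintro ⟨hball, hpair⟩
    rcases Nat.eq_zero_or_pos K with hK | hK
    · subst hK
      exact ⟨x, by simpa using hε.le, fun k => k.elim0⟩
    haveI : Nonempty (Fin K) := ⟨⟨0, hK⟩⟩
    -- per-coordinate facts from box ∩ ball nonempty
    have h1 : ∀ (k : Fin K) (t : Fin d),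
        l k (c k) t < x t + ε ∧ x t - ε ≤ r k (c k) t ∧ l k (c k) t < r k (c k) t := by
      intro k t
      obtain ⟨z, hz1, hz2⟩ := hball k
      have hzt := hz1 t (Set.mem_univ t)
      have hd : dist (z t) (x t) ≤ ε :=
        le_trans (dist_le_pi_dist z x t) (Metric.mem_closedBall.1 hz2)
      rw [Real.dist_eq, abs_sub_le_iff] at hd
      exact ⟨lt_of_lt_of_le hzt.1 (by linarith [hd.1]),
        le_trans (by linarith [hd.2]) hzt.2, lt_of_lt_of_le hzt.1 hzt.2⟩
    -- per-coordinate facts from pairwise intersections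
    have h2 : ∀ (k k' : Fin K) (t : Fin d), l k (c k) t < r k' (c k') t := by
      intro k k' t
      rcases eq_or_ne k k' with h | h
      · subst h; exact (h1 k t).2.2
      · obtain ⟨z, hz1, hz2⟩ := hpair k k' h
        exact lt_of_lt_of_le (hz1 t (Set.mem_univ t)).1 (hz2 t (Set.mem_univ t)).2
    set y : Fin d → ℝ := fun t =>
      min (Finset.univ.inf' Finset.univ_nonempty (fun k : Fin K => r k (c k) t)) (x t + ε)
      with hy
    have hyball : ∀ t, x t - ε ≤ y t ∧ y t ≤ x t + ε := by
      intro t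
      refine ⟨le_min ?_ (by linarith), min_le_right _ _⟩
      exact Finset.le_inf' _ _ fun k _ => (h1 k t).2.1
    have hybox : ∀ k, y ∈ box (l k (c k)) (r k (c k)) := by
      intro k t _
      constructor
      · exact lt_min ((Finset.lt_inf'_iff _).2 fun k' _ => h2 k k' t) (h1 k t).1
      · exact le_trans (min_le_left _ _) (Finset.inf'_le _ (Finset.mem_univ k))
    refine ⟨y, ?_, hybox⟩
    rw [dist_pi_le_iff hε.le]
    intro t
    rw [Real.dist_eq, abs_sub_le_iff]
    have := hyball t
    constructor <;> linarith [this.1, this.2]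
end

section
/- Let v* be the maximum K-clique weight in the K-partite box-intersection graph of K families of boxes with weights, and let v̄_L be the upper bound produced after L levels of merging (where each level merges T parts into pseudo-nodes representing T-cliques with weights equal to sums, and the final bound sums the maximum pseudo-node weight over remaining parts). Then v̄_{L+1} ≤ v̄_L for every L, and when merging is complete (one part remains), the bound equals v* exactly. -/
/-- The multi-level upper bound determined by a grouping `g` of the `K` parts into
blocks: for each block, the maximum (over tuples whose boxes within the block have a
common point, i.e. realizable pseudo nodes) of the sum of weights within the block,
summed over all blocks. -/
noncomputable def levelBound (d K : ℕ) (ι : Fin K → Type) [∀ k, Fintype (ι k)]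
    (l r : ∀ k, ι k → Fin d → ℝ) (v : ∀ k, ι k → ℝ)
    {β : Type} [Fintype β] [DecidableEq β] (g : Fin K → β) : ℝ :=
  ∑ b : β, sSup {w : ℝ | ∃ c : ∀ k, ι k,
      (⋂ k ∈ {k | g k = b}, box (l k (c k)) (r k (c k))).Nonempty ∧
      w = ∑ k ∈ Finset.univ.filter (fun k => g k = b), v k (c k)}

lemma aux_bdd {γ : Type*} [Fintype γ] (P : γ → Prop) (f : γ → ℝ) :
    BddAbove {w : ℝ | ∃ c, P c ∧ w = f c} := by
  apply Set.Finite.bddAbove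
  apply (Set.finite_range f).subset
  rintro w ⟨c, _, rfl⟩
  exact ⟨c, rfl⟩

lemma aux_sub {d K : ℕ} (X : Fin K → Set (Fin d → ℝ)) (s : Set (Fin K)) :
    (⋂ k, X k) ⊆ ⋂ k ∈ s, X k := by
  intro x hx
  exact Set.mem_biInter fun k _ => Set.mem_iInter.mp hx k

/-- Provided a `K`-clique exists (some tuple of boxes with common point), (1) merging
blocks (coarsening the grouping by any map `h` on blocks) can only decrease the bound,
so `v̄_{L+1} ≤ v̄_L`; and (2) when merging is complete (a single block remains), the
bound equals the exact maximum clique weight `v*`. -/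
theorem levelBound_monotone_and_exact (d K : ℕ) (ι : Fin K → Type)
    [∀ k, Fintype (ι k)]
    (l r : ∀ k, ι k → Fin d → ℝ) (v : ∀ k, ι k → ℝ)
    (hstar : ∃ c : ∀ k, ι k, (⋂ k, box (l k (c k)) (r k (c k))).Nonempty) :
    (∀ (β β' : Type) [Fintype β] [DecidableEq β] [Fintype β'] [DecidableEq β']
        (g : Fin K → β) (h : β → β'),
        levelBound d K ι l r v (h ∘ g) ≤ levelBound d K ι l r v g) ∧
    levelBound d K ι l r v (fun _ => (0 : Fin 1))
      = sSup {w : ℝ | ∃ c : ∀ k, ι k,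
          (⋂ k, box (l k (c k)) (r k (c k))).Nonempty ∧ w = ∑ k, v k (c k)} := by
  obtain ⟨c₀, hc₀⟩ := hstar
  constructor
  · intro β β' _ _ _ _ g h
    unfold levelBound
    rw [← Finset.sum_fiberwise Finset.univ h
      (fun b => sSup {w : ℝ | ∃ c : ∀ k, ι k,
        (⋂ k ∈ {k | g k = b}, box (l k (c k)) (r k (c k))).Nonempty ∧
        w = ∑ k ∈ Finset.univ.filter (fun k => g k = b), v k (c k)})]
    apply Finset.sum_le_sum
    intro b' _
    apply csSup_le
    · exact ⟨_, c₀, hc₀.mono (aux_sub _ _), rfl⟩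
    · rintro w ⟨c, hne, rfl⟩
      have key : ∑ k ∈ Finset.univ.filter (fun k => (h ∘ g) k = b'), v k (c k)
          = ∑ b ∈ Finset.univ.filter (fun b => h b = b'),
              ∑ k ∈ Finset.univ.filter (fun k => g k = b), v k (c k) := by
        rw [Finset.sum_fiberwise_eq_sum_filter]
        congr 1
        ext k
        simp [Function.comp]
      rw [key]
      apply Finset.sum_le_sum
      intro b hb
      simp only [Finset.mem_filter] at hb
      apply le_csSup (aux_bdd _ _)
      refine ⟨c, ?_, rfl⟩
      apply hne.mono
      apply Set.biInter_subset_biInter_left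
      intro k hk
      simp only [Set.mem_setOf_eq] at hk ⊢
      simp [Function.comp, hk, hb.2]
  · unfold levelBound
    rw [Fin.sum_univ_one]
    congr 1
    ext w
    constructor
    · rintro ⟨c, hne, rfl⟩
      refine ⟨c, ?_, ?_⟩
      · have : {k : Fin K | (0 : Fin 1) = (0 : Fin 1)} = Set.univ := by
          ext; simp
        simpa [this, Set.biInter_univ] using hne
      · simp
    · rintro ⟨c, hne, rfl⟩
      refine ⟨c, ?_, ?_⟩
      · have : ({k : Fin K | (0 : Fin 1) = (0 : Fin 1)} : Set (Fin K)) = Set.univ := by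
          ext; simp
        simpa [this, Set.biInter_univ] using hne
      · simp
end
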